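/- arXiv:2104.06873 — 6 statements merged into one kernel-verified Lean document; each statement's English description precedes it below -/
import Mathlib

section
/- Let f : Set U → ℝ be nonnegative, monotone, and submodular on a finite ground set U, let k ≥ 1 be an integer, and let A ⊆ U with the property that for every element u ∈ U \ A, f(A ∪ {u}) - f(A) < f(A)/k. Then for any set O ⊆ U with |O| ≤ k, f(O) ≤ 2·f(A). -/
/-!
Submodularity makes the gain of adding all of `O` to `A` at most the sum of the single-element
gains `f (insert u A) - f A` over `u ∈ O`. Each of these is below `f A / k`, and there are at most
`k` of them, so `f O ≤ f (A ∪ O) ≤ f A + k · (f A / k) ≤ 2 f A`.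
-/

namespace Finset

variable {α β : Type*} [DecidableEq α] [AddCommGroup β]

def marginalGain (f : Finset α → β) (A : Finset α) (u : α) : β :=
  f (insert u A) - f A

theorem marginalGain_of_mem (f : Finset α → β) {A : Finset α} {u : α} (hu : u ∈ A) :
    marginalGain f A u = 0 := by
  rw [marginalGain, insert_eq_self.2 hu, sub_self]

variable [PartialOrder β] [IsOrderedAddMonoid β]

def HasDiminishingReturns (f : Finset α → β) : Prop :=
  ∀ S T : Finset α, ∀ u : α, S ⊆ T → u ∉ T → marginalGain f T u ≤ marginalGain f S u

theorem marginalGain_nonneg {f : Finset α → β} (hmono : Monotone f) (A : Finset α) (u : α) :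
    0 ≤ marginalGain f A u :=
  sub_nonneg.2 (hmono (subset_insert u A))

theorem HasDiminishingReturns.union_sub_le_sum_marginalGain {f : Finset α → β}
    (hf : HasDiminishingReturns f) (hmono : Monotone f) (A S : Finset α) :
    f (A ∪ S) - f A ≤ ∑ u ∈ S, marginalGain f A u := by
  induction S using Finset.induction_on with
  | empty => simp
  | @insert a S haS ih =>
    rw [sum_insert haS, union_insert]
    by_cases haAS : a ∈ A ∪ S
    · rw [insert_eq_self.2 haAS]
      exact le_add_of_nonneg_of_le (marginalGain_nonneg hmono A a) ih
    · rw [← sub_add_sub_cancel _ (f (A ∪ S))]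
      exact add_le_add (hf A (A ∪ S) a subset_union_left haAS) ih

theorem HasDiminishingReturns.le_add_card_nsmul {f : Finset α → β}
    (hf : HasDiminishingReturns f) (hmono : Monotone f) {A : Finset α} {c : β} (hc : 0 ≤ c)
    (hgain : ∀ u ∉ A, marginalGain f A u ≤ c) (S : Finset α) :
    f S ≤ f A + S.card • c := by
  have hgain' : ∀ u ∈ S, marginalGain f A u ≤ c := fun u _ => by
    by_cases huA : u ∈ A
    · exact (marginalGain_of_mem f huA).trans_le hc
    · exact hgain u huA
  calc f S ≤ f (A ∪ S) := hmono subset_union_right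
    _ ≤ f A + ∑ u ∈ S, marginalGain f A u :=
      sub_le_iff_le_add'.1 (hf.union_sub_le_sum_marginalGain hmono A S)
    _ ≤ f A + S.card • c := add_le_add_right (sum_le_card_nsmul S _ c hgain') _

end Finset

open Finset in
theorem stmt5_general {U : Type*} [DecidableEq U] (f : Finset U → ℝ)
    (hnonneg : ∀ S, 0 ≤ f S)
    (hmono : ∀ S T : Finset U, S ⊆ T → f S ≤ f T)
    (hsubmod : ∀ S T : Finset U, ∀ u : U, S ⊆ T → u ∉ T →
      f (insert u T) - f T ≤ f (insert u S) - f S)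
    (k : ℕ) (A : Finset U)
    (hA : ∀ u : U, u ∉ A → f (insert u A) - f A < f A / k)
    (O : Finset U) (hO : O.card ≤ k) :
    f O ≤ 2 * f A := by
  have hc : 0 ≤ f A / k := div_nonneg (hnonneg A) k.cast_nonneg
  have hOA : f O ≤ f A + O.card * (f A / k) := by
    simpa only [nsmul_eq_mul] using
      HasDiminishingReturns.le_add_card_nsmul hsubmod hmono hc (fun u hu => (hA u hu).le) O
  have hcard : (O.card : ℝ) * (f A / k) ≤ f A := by
    rcases Nat.eq_zero_or_pos k with rfl | hk
    · simp [Nat.le_zero.1 hO, hnonneg A]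
    · calc (O.card : ℝ) * (f A / k) ≤ k * (f A / k) := by gcongr
        _ = f A := mul_div_cancel₀ _ (by positivity)
  linarith

theorem stmt5 {U : Type*} [Fintype U] [DecidableEq U] (f : Finset U → ℝ)
    (hnonneg : ∀ S, 0 ≤ f S)
    (hmono : ∀ S T : Finset U, S ⊆ T → f S ≤ f T)
    (hsubmod : ∀ S T : Finset U, ∀ u : U, S ⊆ T → u ∉ T →
      f (insert u T) - f T ≤ f (insert u S) - f S)
    (k : ℕ) (hk : 1 ≤ k) (A : Finset U)
    (hA : ∀ u : U, u ∉ A → f (insert u A) - f A < f A / k)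
    (O : Finset U) (hO : O.card ≤ k) :
    f O ≤ 2 * f A :=
  stmt5_general f hnonneg hmono hsubmod k A hA O hO
end

section
/- Let f : Set U → ℝ be nonnegative, monotone, and submodular on a finite ground set U, let k ≥ 1, and let A ⊆ U with |A| > k. Suppose A' ⊆ A with |A'| = k satisfies: for an ordering a'_1, ..., a'_k of A' and letting A'_i = {a'_1,...,a'_i}, A'_0 = ∅, we have f((A \ A') ∪ A'_{i-1} ∪ {a'_i}) - f((A \ A') ∪ A'_{i-1}) ≥ f((A \ A') ∪ A'_{i-1})/k for each i = 1,...,k. Then f(A) ≤ 2·f(A'). -/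
/-!
Write `B = A \ A'`. Each of the `k` greedy steps multiplies `f` by at least `1 + 1/k`, so
`f A ≥ (1 + 1/k)^k f B ≥ 2 f B` by Bernoulli's inequality. Submodularity, applied to adding the
elements of `A'` on top of `B` rather than on top of `∅`, gives
`f A - f B ≤ f A' - f ∅ ≤ f A'`.
Together, `f A ≤ f A / 2 + f A'`.
-/

open Finset

theorem union_sub_le_union_sub_of_submodular {U : Type*} [DecidableEq U] {f : Finset U → ℝ}
    (hsubmod : ∀ S T : Finset U, ∀ u : U, S ⊆ T → u ∉ T →
      f (insert u T) - f T ≤ f (insert u S) - f S)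
    {S T X : Finset U} (hST : S ⊆ T) (hXT : Disjoint X T) :
    f (T ∪ X) - f T ≤ f (S ∪ X) - f S := by
  induction X using Finset.induction_on with
  | empty => simp
  | insert u X hu ih =>
    rw [disjoint_insert_left] at hXT
    have hstep := hsubmod (S ∪ X) (T ∪ X) u (union_subset_union_left hST)
      (by simp [hu, hXT.1])
    rw [union_insert, union_insert]
    linarith [ih hXT.2]

theorem two_le_one_add_one_div_pow {k : ℕ} (hk : 1 ≤ k) : 2 ≤ (1 + 1 / (k : ℝ)) ^ k := by
  have hk' : (k : ℝ) ≠ 0 := by positivity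
  calc (2 : ℝ) = 1 + k * (1 / k) := by field_simp; norm_num
    _ ≤ (1 + 1 / (k : ℝ)) ^ k :=
      one_add_mul_le_pow (by linarith [show 0 ≤ 1 / (k : ℝ) by positivity]) k

theorem stmt6_general {U : Type*} [DecidableEq U] (f : Finset U → ℝ)
    (hnonneg : ∀ S, 0 ≤ f S)
    (hsubmod : ∀ S T : Finset U, ∀ u : U, S ⊆ T → u ∉ T →
      f (insert u T) - f T ≤ f (insert u S) - f S)
    (k : ℕ) (hk : 1 ≤ k) (A : Finset U)
    (a : ℕ → U)
    (A' : Finset U) (hA' : A' = (Finset.range k).image a) (hsub : A' ⊆ A)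
    (hgain : ∀ i < k,
      f (insert (a i) ((A \ A') ∪ (Finset.range i).image a))
        - f ((A \ A') ∪ (Finset.range i).image a)
      ≥ f ((A \ A') ∪ (Finset.range i).image a) / k) :
    f A ≤ 2 * f A' := by
  set B : ℕ → Finset U := fun i => (A \ A') ∪ (range i).image a
  have hstep : ∀ i < k, (1 + 1 / (k : ℝ)) * f (B i) ≤ f (B (i + 1)) := by
    intro i hi
    have hBsucc : B (i + 1) = insert (a i) (B i) := by
      simp [B, range_add_one, image_insert, union_insert]
    have hsplit : (1 + 1 / (k : ℝ)) * f (B i) = f (B i) + f (B i) / k := by ring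
    rw [hBsucc, hsplit]
    linarith [hgain i hi]
  have hBk : B k = A := by
    simp only [B, ← hA']
    exact sdiff_union_of_subset hsub
  have hgrowth : 2 * f (A \ A') ≤ f A :=
    calc 2 * f (A \ A') ≤ (1 + 1 / (k : ℝ)) ^ k * f (B 0) := by
          simpa [B] using mul_le_mul_of_nonneg_right (two_le_one_add_one_div_pow hk) (hnonneg _)
      _ ≤ f (B k) := geom_le (by positivity) k hstep
      _ = f A := by rw [hBk]
  have hexchange : f A - f (A \ A') ≤ f A' - f ∅ := by
    simpa [sdiff_union_of_subset hsub] using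
      union_sub_le_union_sub_of_submodular hsubmod (empty_subset (A \ A')) disjoint_sdiff
  linarith [hnonneg ∅]

theorem stmt6 {U : Type*} [Fintype U] [DecidableEq U] (f : Finset U → ℝ)
    (hnonneg : ∀ S, 0 ≤ f S)
    (hmono : ∀ S T : Finset U, S ⊆ T → f S ≤ f T)
    (hsubmod : ∀ S T : Finset U, ∀ u : U, S ⊆ T → u ∉ T →
      f (insert u T) - f T ≤ f (insert u S) - f S)
    (k : ℕ) (hk : 1 ≤ k) (A : Finset U) (hcard : k < A.card)
    (a : ℕ → U) (hinj : Set.InjOn a (Set.Iio k))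
    (A' : Finset U) (hA' : A' = (Finset.range k).image a) (hsub : A' ⊆ A)
    (hgain : ∀ i < k,
      f (insert (a i) ((A \ A') ∪ (Finset.range i).image a))
        - f ((A \ A') ∪ (Finset.range i).image a)
      ≥ f ((A \ A') ∪ (Finset.range i).image a) / k) :
    f A ≤ 2 * f A' :=
  stmt6_general f hnonneg hsubmod k hk A a A' hA' hsub hgain
end

section
/- Let f : Set U → ℝ be nonnegative, monotone, and submodular on a finite ground set U. Suppose A_+ ⊆ U can be written as A_+ = A ∪ B_1 ∪ ... ∪ B_m with pairwise disjoint sets where f(A) ≥ k^{ℓ·i}·f(B_i) for each i = 1,...,m, for integers k ≥ 2 and ℓ ≥ 1. Then f(A_+) ≤ f(A)·(1/(1 - k^{-ℓ})). -/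
/-! Submodularity with nonnegativity makes `f` subadditive, so `f A₊ ≤ f A + ∑ f (B i)`, and the
hypotheses bound the sum by the geometric series `f A * ∑_{i ≥ 1} k^(-ℓi)`. -/

open Finset

section Submodular

variable {U : Type*} [DecidableEq U] {f : Finset U → ℝ}

/-- Peeling off an element `u ∈ T \ S` costs at most its marginal value in `T`, by diminishing
returns along `T.erase u ⊆ S ∪ T.erase u`. -/
theorem union_le_add_of_submodular (hnonneg : ∀ S, 0 ≤ f S)
    (hsubmod : ∀ S T : Finset U, ∀ u : U, S ⊆ T → u ∉ T →
      f (insert u T) - f T ≤ f (insert u S) - f S)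
    (S T : Finset U) : f (S ∪ T) ≤ f S + f T := by
  induction T using Finset.strongInduction generalizing S with
  | _ T ih =>
    by_cases hTS : T ⊆ S
    · rw [union_eq_left.mpr hTS]
      linarith [hnonneg T]
    · obtain ⟨u, huT, huS⟩ := not_subset.mp hTS
      have hu : u ∉ S ∪ T.erase u := by simp [huS]
      have hmarginal := hsubmod (T.erase u) (S ∪ T.erase u) u subset_union_right hu
      rw [← union_insert, insert_erase huT] at hmarginal
      linarith [ih (T.erase u) (erase_ssubset huT) S]

theorem le_add_sum_biUnion (hsubadd : ∀ S T : Finset U, f (S ∪ T) ≤ f S + f T)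
    {ι : Type*} [DecidableEq ι] (A : Finset U) (B : ι → Finset U) (s : Finset ι) :
    f (A ∪ s.biUnion B) ≤ f A + ∑ i ∈ s, f (B i) := by
  induction s using Finset.induction with
  | empty => simp
  | @insert a s ha ih =>
    rw [biUnion_insert, sum_insert ha, union_left_comm]
    linarith [hsubadd (B a) (A ∪ s.biUnion B)]

end Submodular

theorem add_sum_Icc_le_of_le_geometric {c r : ℝ} {a : ℕ → ℝ} {m : ℕ}
    (hc : 0 ≤ c) (hr0 : 0 ≤ r) (hr1 : r < 1) (ha : ∀ i ∈ Icc 1 m, a i ≤ c * r ^ i) :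
    c + ∑ i ∈ Icc 1 m, a i ≤ c * (1 / (1 - r)) := by
  have hgeom : ∑ i ∈ Icc 1 m, r ^ i ≤ r / (1 - r) := by
    simpa only [Ico_add_one_right_eq_Icc, pow_one] using
      geom_sum_Ico_le_of_lt_one (m := 1) (n := m + 1) hr0 hr1
  calc c + ∑ i ∈ Icc 1 m, a i ≤ c + c * ∑ i ∈ Icc 1 m, r ^ i := by
        rw [mul_sum]; gcongr with i hi; exact ha i hi
    _ ≤ c + c * (r / (1 - r)) := by gcongr
    _ = c * (1 / (1 - r)) := by field_simp [(sub_pos.2 hr1).ne']; ring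

theorem stmt9_general {U : Type*} [DecidableEq U] (f : Finset U → ℝ)
    (hnonneg : ∀ S, 0 ≤ f S)
    (hsubmod : ∀ S T : Finset U, ∀ u : U, S ⊆ T → u ∉ T →
      f (insert u T) - f T ≤ f (insert u S) - f S)
    (k l m : ℕ) (hk : 2 ≤ k) (hl : 1 ≤ l)
    (A : Finset U) (B : ℕ → Finset U) (Aplus : Finset U)
    (hAplus : Aplus = A ∪ (Finset.Icc 1 m).biUnion B)
    (hval : ∀ i ∈ Finset.Icc 1 m, (k : ℝ) ^ (l * i) * f (B i) ≤ f A) :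
    f Aplus ≤ f A * (1 / (1 - 1 / (k : ℝ) ^ l)) := by
  have hkl : 1 < (k : ℝ) ^ l := one_lt_pow₀ (by exact_mod_cast hk) (by omega)
  have hB : ∀ i ∈ Icc 1 m, f (B i) ≤ f A * (1 / (k : ℝ) ^ l) ^ i := by
    intro i hi
    rw [div_pow, one_pow, mul_one_div, le_div_iff₀ (by positivity), ← pow_mul, mul_comm]
    exact hval i hi
  rw [hAplus]
  exact (le_add_sum_biUnion (union_le_add_of_submodular hnonneg hsubmod) A B _).trans
    (add_sum_Icc_le_of_le_geometric (hnonneg A) (by positivity)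
      ((div_lt_one (by positivity)).2 hkl) hB)

theorem stmt9 {U : Type*} [Fintype U] [DecidableEq U] (f : Finset U → ℝ)
    (hnonneg : ∀ S, 0 ≤ f S)
    (hmono : ∀ S T : Finset U, S ⊆ T → f S ≤ f T)
    (hsubmod : ∀ S T : Finset U, ∀ u : U, S ⊆ T → u ∉ T →
      f (insert u T) - f T ≤ f (insert u S) - f S)
    (k l m : ℕ) (hk : 2 ≤ k) (hl : 1 ≤ l)
    (A : Finset U) (B : ℕ → Finset U) (Aplus : Finset U)
    (hAplus : Aplus = A ∪ (Finset.Icc 1 m).biUnion B)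
    (hdisjA : ∀ i ∈ Finset.Icc 1 m, Disjoint A (B i))
    (hdisjB : ∀ i ∈ Finset.Icc 1 m, ∀ j ∈ Finset.Icc 1 m, i ≠ j →
      Disjoint (B i) (B j))
    (hval : ∀ i ∈ Finset.Icc 1 m, (k : ℝ) ^ (l * i) * f (B i) ≤ f A) :
    f Aplus ≤ f A * (1 / (1 - 1 / (k : ℝ) ^ l)) :=
  stmt9_general f hnonneg hsubmod k l m hk hl A B Aplus hAplus hval
end

section
/- Let f : Set U → ℝ be nonnegative, monotone, and submodular on a finite ground set U, let k ≥ 2 and ℓ ≥ 2 be integers. Suppose A, A_+ ⊆ U with A ⊆ A_+ satisfy f(A_+) ≤ (1 + 1/(k^ℓ - 1))·f(A), and suppose for every o ∈ U \ A_+ there exists a set A_o ⊆ A_+ with f(A_+ ∪ {o}) - f(A_+) ≤ f(A_o)/k and f(A_o) ≤ f(A). Then for any O ⊆ U with |O| ≤ k, f(O) ≤ (2 + 1/(k^ℓ - 1))·f(A). -/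
/-!
Since `f` is monotone and submodular, `f O ≤ f (A₊ ∪ O) ≤ f A₊ + ∑_{o ∈ O} (f (A₊ ∪ {o}) - f A₊)`.
The threshold condition bounds each marginal gain by `f A / k`, so the sum is at most
`|O| · f A / k ≤ f A`, and `f A₊ ≤ (1 + 1/(k^ℓ - 1)) f A` finishes the estimate.
-/

namespace Finset

variable {α β : Type*} [DecidableEq α] [AddCommGroup β] [PartialOrder β] [IsOrderedAddMonoid β]

theorem sub_le_sum_insert_sub_of_submodular (f : Finset α → β)
    (hsubmod : ∀ S T : Finset α, ∀ u : α, S ⊆ T → u ∉ T →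
      f (insert u T) - f T ≤ f (insert u S) - f S)
    (B S : Finset α) :
    f (B ∪ S) - f B ≤ ∑ o ∈ S, (f (insert o B) - f B) := by
  induction S using Finset.induction with
  | empty => simp
  | @insert a S ha ih =>
    rw [sum_insert ha, union_insert]
    by_cases haB : a ∈ B
    · rw [insert_eq_of_mem (mem_union_left S haB), insert_eq_of_mem haB, sub_self, zero_add]
      exact ih
    · have hgain := hsubmod B (B ∪ S) a subset_union_left (by simp [haB, ha])
      calc f (insert a (B ∪ S)) - f B
          = (f (insert a (B ∪ S)) - f (B ∪ S)) + (f (B ∪ S) - f B) := by abel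
        _ ≤ (f (insert a B) - f B) + ∑ o ∈ S, (f (insert o B) - f B) := add_le_add hgain ih

end Finset

theorem natCast_mul_div_le {n k : ℕ} {x : ℝ} (hnk : n ≤ k) (hx : 0 ≤ x) :
    (n : ℝ) * (x / k) ≤ x := by
  rcases Nat.eq_zero_or_pos k with rfl | hk
  · simpa using hx
  calc (n : ℝ) * (x / k) ≤ k * (x / k) := by gcongr
    _ = x := mul_div_cancel₀ x (by positivity)

theorem stmt10_general {U : Type*} [DecidableEq U] (f : Finset U → ℝ)
    (hnonneg : ∀ S, 0 ≤ f S)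
    (hmono : ∀ S T : Finset U, S ⊆ T → f S ≤ f T)
    (hsubmod : ∀ S T : Finset U, ∀ u : U, S ⊆ T → u ∉ T →
      f (insert u T) - f T ≤ f (insert u S) - f S)
    (k l : ℕ)
    (A Aplus : Finset U)
    (hAplus : f Aplus ≤ (1 + 1 / ((k : ℝ) ^ l - 1)) * f A)
    (hthresh : ∀ o : U, o ∉ Aplus → ∃ Ao : Finset U, Ao ⊆ Aplus ∧
      f (insert o Aplus) - f Aplus ≤ f Ao / k ∧ f Ao ≤ f A)
    (O : Finset U) (hO : O.card ≤ k) :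
    f O ≤ (2 + 1 / ((k : ℝ) ^ l - 1)) * f A := by
  have hgain : ∀ o : U, f (insert o Aplus) - f Aplus ≤ f A / k := by
    intro o
    by_cases ho : o ∈ Aplus
    · rw [Finset.insert_eq_of_mem ho, sub_self]
      exact div_nonneg (hnonneg A) k.cast_nonneg
    · obtain ⟨Ao, -, hgain_le, hAo⟩ := hthresh o ho
      exact hgain_le.trans (by gcongr)
  calc f O ≤ f (Aplus ∪ O) := hmono _ _ Finset.subset_union_right
    _ ≤ f Aplus + ∑ o ∈ O, (f (insert o Aplus) - f Aplus) := by
      linarith [Finset.sub_le_sum_insert_sub_of_submodular f hsubmod Aplus O]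
    _ ≤ f Aplus + O.card * (f A / k) := by
      grw [Finset.sum_le_card_nsmul O _ _ fun o _ => hgain o, nsmul_eq_mul]
    _ ≤ f Aplus + f A := by grw [natCast_mul_div_le hO (hnonneg A)]
    _ ≤ (2 + 1 / ((k : ℝ) ^ l - 1)) * f A := by linarith

theorem stmt10 {U : Type*} [Fintype U] [DecidableEq U] (f : Finset U → ℝ)
    (hnonneg : ∀ S, 0 ≤ f S)
    (hmono : ∀ S T : Finset U, S ⊆ T → f S ≤ f T)
    (hsubmod : ∀ S T : Finset U, ∀ u : U, S ⊆ T → u ∉ T →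
      f (insert u T) - f T ≤ f (insert u S) - f S)
    (k l : ℕ) (hk : 2 ≤ k) (hl : 2 ≤ l)
    (A Aplus : Finset U) (hsub : A ⊆ Aplus)
    (hAplus : f Aplus ≤ (1 + 1 / ((k : ℝ) ^ l - 1)) * f A)
    (hthresh : ∀ o : U, o ∉ Aplus → ∃ Ao : Finset U, Ao ⊆ Aplus ∧
      f (insert o Aplus) - f Aplus ≤ f Ao / k ∧ f Ao ≤ f A)
    (O : Finset U) (hO : O.card ≤ k) :
    f O ≤ (2 + 1 / ((k : ℝ) ^ l - 1)) * f A :=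
  stmt10_general f hnonneg hmono hsubmod k l A Aplus hAplus hthresh O hO
end

section
/- Let f : Set U → ℝ be nonnegative, monotone, and submodular on a finite ground set U, let k ≥ 1, and let OPT = max{f(O) : O ⊆ U, |O| ≤ k}. Suppose a sequence of sets ∅ = A_0 ⊆ A_1 ⊆ ... ⊆ A_k with |A_i| = i satisfies f(A_{i+1}) - f(A_i) ≥ ((1-ε)/k)·(OPT - f(A_i)) for all 0 ≤ i < k, where 0 < ε < 1. Then f(A_k) ≥ (1 - e^{-(1-ε)})·OPT. -/
/-!
The gain condition says that the gap `OPT - f (A i)` contracts by the factor `1 - (1 - ε) / k`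
at each step, so after `k` steps it is at most `(1 - (1 - ε) / k) ^ k * OPT ≤ exp (-(1 - ε)) * OPT`.
-/

open Real

theorem sub_le_one_sub_div_pow_mul_sub {v : ℕ → ℝ} {M t : ℝ} {n : ℕ} (ht : t ≤ n)
    (hgain : ∀ i < n, v (i + 1) - v i ≥ t / n * (M - v i)) :
    M - v n ≤ (1 - t / n) ^ n * (M - v 0) := by
  have hratio : 0 ≤ 1 - t / n := sub_nonneg.2 (div_le_one_of_le₀ ht n.cast_nonneg)
  refine le_geom (u := fun i ↦ M - v i) hratio n fun i hi ↦ ?_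
  linarith [hgain i hi]

theorem one_sub_exp_neg_mul_le_of_gain {v : ℕ → ℝ} {M t : ℝ} {n : ℕ} (ht : t ≤ n)
    (hM : 0 ≤ M) (hv0 : 0 ≤ v 0) (hgain : ∀ i < n, v (i + 1) - v i ≥ t / n * (M - v i)) :
    (1 - exp (-t)) * M ≤ v n := by
  have hratio : 0 ≤ 1 - t / n := sub_nonneg.2 (div_le_one_of_le₀ ht n.cast_nonneg)
  have hgap : M - v n ≤ exp (-t) * M :=
    calc M - v n ≤ (1 - t / n) ^ n * (M - v 0) := sub_le_one_sub_div_pow_mul_sub ht hgain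
      _ ≤ (1 - t / n) ^ n * M := by gcongr; linarith
      _ ≤ exp (-t) * M := by gcongr; exact one_sub_div_pow_le_exp_neg ht
  linarith

theorem stmt15_general {U : Type*} (f : Finset U → ℝ)
    (hnonneg : ∀ S, 0 ≤ f S)
    (k : ℕ) (hk : 1 ≤ k) (OPT : ℝ)
    (ε : ℝ) (hε0 : 0 < ε) (hε1 : ε < 1)
    (A : ℕ → Finset U)
    (hgain : ∀ i < k, f (A (i + 1)) - f (A i) ≥ ((1 - ε) / k) * (OPT - f (A i))) :
    f (A k) ≥ (1 - Real.exp (-(1 - ε))) * OPT := by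
  rcases le_or_gt 0 OPT with hOPT | hOPT
  · have ht : 1 - ε ≤ k := by
      have : (1 : ℝ) ≤ k := by exact_mod_cast hk
      linarith
    exact one_sub_exp_neg_mul_le_of_gain (v := fun i ↦ f (A i)) ht hOPT (hnonneg _) hgain
  · have hcoef : 0 ≤ 1 - exp (-(1 - ε)) := sub_nonneg.2 (exp_le_one_iff.2 (by linarith))
    nlinarith [hnonneg (A k)]

theorem stmt15 {U : Type*} [Fintype U] [DecidableEq U] (f : Finset U → ℝ)
    (hnonneg : ∀ S, 0 ≤ f S)
    (hmono : ∀ S T : Finset U, S ⊆ T → f S ≤ f T)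
    (hsubmod : ∀ S T : Finset U, ∀ u : U, S ⊆ T → u ∉ T →
      f (insert u T) - f T ≤ f (insert u S) - f S)
    (k : ℕ) (hk : 1 ≤ k) (OPT : ℝ)
    (hOPT : IsGreatest {x : ℝ | ∃ O : Finset U, O.card ≤ k ∧ f O = x} OPT)
    (ε : ℝ) (hε0 : 0 < ε) (hε1 : ε < 1)
    (A : ℕ → Finset U) (hA0 : A 0 = ∅)
    (hchain : ∀ i < k, A i ⊆ A (i + 1))
    (hcard : ∀ i ≤ k, (A i).card = i)
    (hgain : ∀ i < k, f (A (i + 1)) - f (A i) ≥ ((1 - ε) / k) * (OPT - f (A i))) :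
    f (A k) ≥ (1 - Real.exp (-(1 - ε))) * OPT :=
  stmt15_general f hnonneg k hk OPT ε hε0 hε1 A hgain
end

section
/- Let f : Set U → ℝ be nonnegative, monotone, and submodular on a finite ground set U, let k ≥ 1, 0 < ε < 1/2, and let OPT = max{f(O) : |O| ≤ k}. Suppose A ⊆ U satisfies: for all o ∈ U \ A, f(A ∪ {o}) - f(A) ≤ OPT/(8k(1-ε)). Then f(A) ≥ (3/4)·OPT. -/
/-!
Let `O` attain `OPT`. By submodularity the gain `f (A ∪ O) - f A` is at most the sum of the
single-element gains `f (insert o A) - f A` over `o ∈ O \ A`, each at most `OPT / (8k(1-ε))`,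
and there are at most `k` of them. Hence `OPT ≤ f (A ∪ O) ≤ f A + OPT / (8(1-ε)) ≤ f A + OPT / 4`.
-/

open Finset

section Submodular

variable {U : Type*} [DecidableEq U] {f : Finset U → ℝ}

theorem sub_le_sum_sdiff_marginal
    (hsubmod : ∀ S T : Finset U, ∀ u : U, S ⊆ T → u ∉ T →
      f (insert u T) - f T ≤ f (insert u S) - f S)
    (A S : Finset U) :
    f (A ∪ S) - f A ≤ ∑ o ∈ S \ A, (f (insert o A) - f A) := by
  induction S using Finset.induction with
  | empty => simp
  | @insert a S ha ih =>
    have hunion : A ∪ insert a S = insert a (A ∪ S) := by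
      rw [union_insert]
    by_cases haA : a ∈ A
    · rwa [hunion, insert_eq_self.mpr (mem_union_left S haA), insert_sdiff_of_mem _ haA]
    · have haAS : a ∉ A ∪ S := by simp [haA, ha]
      rw [hunion, insert_sdiff_of_notMem _ haA, sum_insert (by simp [ha])]
      linarith [hsubmod A (A ∪ S) a subset_union_left haAS]

theorem le_add_card_sdiff_mul_of_marginal_le
    (hmono : ∀ S T : Finset U, S ⊆ T → f S ≤ f T)
    (hsubmod : ∀ S T : Finset U, ∀ u : U, S ⊆ T → u ∉ T →
      f (insert u T) - f T ≤ f (insert u S) - f S)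
    {A : Finset U} {δ : ℝ} (hA : ∀ o, o ∉ A → f (insert o A) - f A ≤ δ) (O : Finset U) :
    f O ≤ f A + #(O \ A) * δ := by
  have hsum : ∑ o ∈ O \ A, (f (insert o A) - f A) ≤ #(O \ A) * δ := by
    simpa using sum_le_sum fun o ho => hA o (mem_sdiff.mp ho).2
  linarith [hmono O (A ∪ O) subset_union_right, sub_le_sum_sdiff_marginal hsubmod A O]

end Submodular

theorem stmt17_general {U : Type*} [DecidableEq U] (f : Finset U → ℝ)
    (hnonneg : ∀ S, 0 ≤ f S)
    (hmono : ∀ S T : Finset U, S ⊆ T → f S ≤ f T)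
    (hsubmod : ∀ S T : Finset U, ∀ u : U, S ⊆ T → u ∉ T →
      f (insert u T) - f T ≤ f (insert u S) - f S)
    (k : ℕ) (ε : ℝ) (hε1 : ε < 1 / 2) (OPT : ℝ)
    (hOPT : IsGreatest {x : ℝ | ∃ O : Finset U, O.card ≤ k ∧ f O = x} OPT)
    (A : Finset U)
    (hA : ∀ o : U, o ∉ A → f (insert o A) - f A ≤ OPT / (8 * k * (1 - ε))) :
    f A ≥ (3 / 4) * OPT := by
  obtain ⟨⟨O, hOk, rfl⟩, hO⟩ := hOPT
  have hfO : 0 ≤ f O := (hnonneg ∅).trans (hO ⟨∅, by simp, rfl⟩)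
  have hδ : 0 ≤ f O / (8 * k * (1 - ε)) := div_nonneg hfO (by nlinarith [k.cast_nonneg (α := ℝ)])
  have hcard : (#(O \ A) : ℝ) ≤ k := by
    exact_mod_cast (card_le_card sdiff_subset).trans hOk
  have hkδ : (k : ℝ) * (f O / (8 * k * (1 - ε))) ≤ f O / 4 := by
    rcases (k.cast_nonneg (α := ℝ)).eq_or_lt with hk | hk
    · rw [← hk, zero_mul]; positivity
    · have hε : 0 < 1 - ε := by linarith
      rw [show (k : ℝ) * (f O / (8 * k * (1 - ε))) = f O / (8 * (1 - ε)) by field_simp]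
      exact div_le_div_of_nonneg_left hfO (by norm_num) (by linarith)
  linarith [le_add_card_sdiff_mul_of_marginal_le hmono hsubmod hA O,
    mul_le_mul_of_nonneg_right hcard hδ]

theorem stmt17 {U : Type*} [Fintype U] [DecidableEq U] (f : Finset U → ℝ)
    (hnonneg : ∀ S, 0 ≤ f S)
    (hmono : ∀ S T : Finset U, S ⊆ T → f S ≤ f T)
    (hsubmod : ∀ S T : Finset U, ∀ u : U, S ⊆ T → u ∉ T →
      f (insert u T) - f T ≤ f (insert u S) - f S)
    (k : ℕ) (hk : 1 ≤ k) (ε : ℝ) (hε0 : 0 < ε) (hε1 : ε < 1 / 2) (OPT : ℝ)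
    (hOPT : IsGreatest {x : ℝ | ∃ O : Finset U, O.card ≤ k ∧ f O = x} OPT)
    (A : Finset U)
    (hA : ∀ o : U, o ∉ A → f (insert o A) - f A ≤ OPT / (8 * k * (1 - ε))) :
    f A ≥ (3 / 4) * OPT :=
  stmt17_general f hnonneg hmono hsubmod k ε hε1 OPT hOPT A hA
end
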